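/- (Dimension 32 case of the main theorem.) Define P₃₂(z) = (1 − z)⁴ − (15/4)(1 − z) z². For every real y > 0, P₃₂(z(y)) ≥ P₃₂(1/4) > 0; consequently the secrecy function Ξ(y) = P₃₂(z(y))^{-1} of the extremal even unimodular lattice in dimension 32 satisfies Ξ(y) ≤ Ξ(1) = P₃₂(1/4)^{-1}. -/
import Mathlib


/-- Jacobi theta constant θ₂ on the imaginary axis. -/
noncomputable def theta2 (y : ℝ) : ℝ := ∑' n : ℤ, Real.exp (-Real.pi * y * (n + 1/2)^2)

/-- Jacobi theta constant θ₃ on the imaginary axis. -/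
noncomputable def theta3 (y : ℝ) : ℝ := ∑' n : ℤ, Real.exp (-Real.pi * y * n^2)

/-- Jacobi theta constant θ₄ on the imaginary axis. -/
noncomputable def theta4 (y : ℝ) : ℝ := ∑' n : ℤ, (-1 : ℝ)^n * Real.exp (-Real.pi * y * n^2)

/-- The function z(y) = θ₂(y)⁴θ₄(y)⁴/θ₃(y)⁸. -/
noncomputable def zfun (y : ℝ) : ℝ := theta2 y ^ 4 * theta4 y ^ 4 / theta3 y ^ 8

/-- Denominator polynomial of the secrecy function of the extremal even
unimodular lattice in dimension 32. -/
noncomputable def P32 (z : ℝ) : ℝ := (1 - z) ^ 4 - 15 / 4 * (1 - z) * z ^ 2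

open Real Complex in
noncomputable def th (y h : ℝ) : ℝ := ∑' n : ℤ, rexp (-π * y * ((n : ℝ) + h)^2)

section Aux
open Real Complex

lemma summable_th {y : ℝ} (h : ℝ) (hy : 0 < y) :
    Summable fun n : ℤ => rexp (-π * y * ((n : ℝ) + h)^2) := by
  have h1 : Summable fun n : ℤ => jacobiTheta₂_term n ((y*h : ℝ) * Complex.I) ((y : ℝ) * Complex.I) :=
    (summable_jacobiTheta₂_term_iff _ _).mpr (by simpa using hy)
  rw [← summable_norm_iff] at h1
  have h2 := h1.mul_left (rexp (-π * y * h^2))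
  refine h2.congr fun n => ?_
  rw [norm_jacobiTheta₂_term, ← Real.exp_add]
  congr 1
  simp only [Complex.mul_I_im, Complex.ofReal_re]
  ring

lemma theta3_eq (y : ℝ) : theta3 y = th y 0 := tsum_congr fun n => by rw [add_zero]
lemma theta2_eq (y : ℝ) : theta2 y = th y (1/2) := rfl

lemma summable_th_norm {y : ℝ} (h : ℝ) (hy : 0 < y) :
    Summable fun n : ℤ => ‖rexp (-π * y * ((n : ℝ) + h)^2)‖ := by
  simpa [Real.norm_eq_abs, abs_of_pos (Real.exp_pos _)] using summable_th h hy

lemma summable_th4 {y : ℝ} (hy : 0 < y) :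
    Summable fun n : ℤ => (-1 : ℝ)^n * rexp (-π * y * ((n : ℝ) + 0)^2) := by
  refine Summable.of_norm ?_
  simpa [Real.norm_eq_abs, abs_mul, abs_zpow, abs_of_pos (Real.exp_pos _)]
    using summable_th (0 : ℝ) hy

lemma summable_th4_norm {y : ℝ} (hy : 0 < y) :
    Summable fun n : ℤ => ‖(-1 : ℝ)^n * rexp (-π * y * ((n : ℝ) + 0)^2)‖ := by
  simpa [Real.norm_eq_abs, abs_mul, abs_zpow, abs_of_pos (Real.exp_pos _)]
    using summable_th (0 : ℝ) hy

lemma theta4_eq (y : ℝ) : theta4 y = ∑' n : ℤ, (-1 : ℝ)^n * rexp (-π * y * ((n : ℝ) + 0)^2) :=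
  tsum_congr fun n => by rw [add_zero]

lemma hasSum_mul {y : ℝ} (h1 h2 : ℝ) (hy : 0 < y) :
    HasSum (fun p : ℤ × ℤ =>
      rexp (-π * y * ((p.1 : ℝ) + h1)^2) * rexp (-π * y * ((p.2 : ℝ) + h2)^2))
      (th y h1 * th y h2) := by
  have S := summable_mul_of_summable_norm (summable_th_norm h1 hy) (summable_th_norm h2 hy)
  have hT : (∑' z : ℤ × ℤ, rexp (-π * y * ((z.1 : ℝ) + h1)^2) * rexp (-π * y * ((z.2 : ℝ) + h2)^2))
      = th y h1 * th y h2 :=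
    (tsum_mul_tsum_of_summable_norm (summable_th_norm h1 hy) (summable_th_norm h2 hy)).symm
  exact hT ▸ S.hasSum

lemma hasSum_mul4 {y : ℝ} (hy : 0 < y) :
    HasSum (fun p : ℤ × ℤ =>
      ((-1 : ℝ)^p.1 * rexp (-π * y * ((p.1 : ℝ) + 0)^2)) *
      ((-1 : ℝ)^p.2 * rexp (-π * y * ((p.2 : ℝ) + 0)^2)))
      (theta4 y * theta4 y) := by
  have S := summable_mul_of_summable_norm (summable_th4_norm hy) (summable_th4_norm hy)
  have hT := (tsum_mul_tsum_of_summable_norm (summable_th4_norm hy) (summable_th4_norm hy)).symm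
  rw [theta4_eq]
  exact hT ▸ S.hasSum

lemma hasSum_split {f : ℤ → ℝ} {a b : ℝ} (h1 : HasSum (fun n : ℤ => f (2*n)) a)
    (h2 : HasSum (fun n : ℤ => f (2*n+1)) b) : HasSum f (a + b) := by
  have i1 : Function.Injective (fun n : ℤ => 2*n) := by
    intro x y h; dsimp only at h; omega
  have i2 : Function.Injective (fun n : ℤ => 2*n+1) := by
    intro x y h; dsimp only at h; omega
  refine HasSum.add_isCompl ?_ (i1.hasSum_range_iff.2 h1) (i2.hasSum_range_iff.2 h2)
  constructor
  · rw [Set.disjoint_left]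
    rintro x ⟨p, rfl⟩ ⟨q, hq⟩
    dsimp only at hq
    omega
  · rw [codisjoint_iff_le_sup]
    intro x _
    simp only [Set.sup_eq_union, Set.mem_union, Set.mem_range]
    rcases Int.even_or_odd x with ⟨k, hk⟩ | ⟨k, hk⟩
    · exact Or.inl ⟨k, by omega⟩
    · exact Or.inr ⟨k, by omega⟩

lemma hasSum_split2 {f : ℤ × ℤ → ℝ} {a b : ℝ}
    (h1 : HasSum (fun p : ℤ × ℤ => f (p.1 + p.2, p.1 - p.2)) a)
    (h2 : HasSum (fun p : ℤ × ℤ => f (p.1 + p.2 + 1, p.1 - p.2)) b) : HasSum f (a + b) := by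
  have i1 : Function.Injective (fun p : ℤ × ℤ => (p.1 + p.2, p.1 - p.2)) := by
    rintro ⟨x1, x2⟩ ⟨y1, y2⟩ h
    simp only [Prod.mk.injEq] at h ⊢
    omega
  have i2 : Function.Injective (fun p : ℤ × ℤ => (p.1 + p.2 + 1, p.1 - p.2)) := by
    rintro ⟨x1, x2⟩ ⟨y1, y2⟩ h
    simp only [Prod.mk.injEq] at h ⊢
    omega
  refine HasSum.add_isCompl ?_ (i1.hasSum_range_iff.2 h1) (i2.hasSum_range_iff.2 h2)
  constructor
  · rw [Set.disjoint_left]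
    rintro ⟨m, n⟩ ⟨⟨p1, p2⟩, hp⟩ ⟨⟨q1, q2⟩, hq⟩
    simp only [Prod.mk.injEq] at hp hq
    omega
  · rw [codisjoint_iff_le_sup]
    rintro ⟨m, n⟩ _
    simp only [Set.sup_eq_union, Set.mem_union, Set.mem_range]
    rcases Int.even_or_odd (m + n) with ⟨k, hk⟩ | ⟨k, hk⟩
    · exact Or.inl ⟨(k, m - k), by simp only [Prod.mk.injEq]; omega⟩
    · exact Or.inr ⟨(k, m - 1 - k), by simp only [Prod.mk.injEq]; omega⟩

lemma neg_one_zpow_twice (a b : ℤ) : (-1 : ℝ)^(a+b) * (-1 : ℝ)^(a-b) = 1 := by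
  rw [← zpow_add₀ (by norm_num : (-1 : ℝ) ≠ 0)]
  have h : a + b + (a - b) = 2 * a := by ring
  rw [h, zpow_mul]
  norm_num

lemma neg_one_zpow_twice' (a b : ℤ) : (-1 : ℝ)^(a+b+1) * (-1 : ℝ)^(a-b) = -1 := by
  rw [← zpow_add₀ (by norm_num : (-1 : ℝ) ≠ 0)]
  have h : a + b + 1 + (a - b) = 2 * a + 1 := by ring
  rw [h, zpow_add₀ (by norm_num : (-1 : ℝ) ≠ 0), zpow_mul]
  norm_num

/-- θ₃(y)² = θ₃(2y)² + θ₂(2y)² -/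
lemma identity_A {y : ℝ} (hy : 0 < y) :
    theta3 y * theta3 y = th (2*y) 0 * th (2*y) 0 + th (2*y) (1/2) * th (2*y) (1/2) := by
  have h2y : 0 < 2*y := by linarith
  set f : ℤ × ℤ → ℝ := fun p =>
    rexp (-π * y * ((p.1 : ℝ) + 0)^2) * rexp (-π * y * ((p.2 : ℝ) + 0)^2) with hf
  have hA : HasSum f (th y 0 * th y 0) := hasSum_mul 0 0 hy
  have h1 : HasSum (fun p : ℤ × ℤ => f (p.1 + p.2, p.1 - p.2)) (th (2*y) 0 * th (2*y) 0) := by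
    have heq : (fun p : ℤ × ℤ => f (p.1 + p.2, p.1 - p.2)) = fun p : ℤ × ℤ =>
        rexp (-π * (2*y) * ((p.1 : ℝ) + 0)^2) * rexp (-π * (2*y) * ((p.2 : ℝ) + 0)^2) := by
      funext p
      simp only [hf]
      rw [← Real.exp_add, ← Real.exp_add]
      congr 1
      push_cast
      ring
    rw [heq]
    exact hasSum_mul 0 0 h2y
  have h2 : HasSum (fun p : ℤ × ℤ => f (p.1 + p.2 + 1, p.1 - p.2))
      (th (2*y) (1/2) * th (2*y) (1/2)) := by
    have heq : (fun p : ℤ × ℤ => f (p.1 + p.2 + 1, p.1 - p.2)) = fun p : ℤ × ℤ =>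
        rexp (-π * (2*y) * ((p.1 : ℝ) + 1/2)^2) * rexp (-π * (2*y) * ((p.2 : ℝ) + 1/2)^2) := by
      funext p
      simp only [hf]
      rw [← Real.exp_add, ← Real.exp_add]
      congr 1
      push_cast
      ring
    rw [heq]
    exact hasSum_mul (1/2) (1/2) h2y
  rw [theta3_eq]
  exact hA.unique (hasSum_split2 h1 h2)

lemma th_one_eq (w : ℝ) : th w 1 = th w 0 := by
  rw [th, th, ← (Equiv.addRight (1 : ℤ)).tsum_eq
    (fun n : ℤ => rexp (-π * w * ((n : ℝ) + 0)^2))]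
  refine tsum_congr fun n => ?_
  simp only [Equiv.coe_addRight]
  congr 1
  push_cast
  ring

/-- θ₄(y)² = θ₃(2y)² - θ₂(2y)² -/
lemma identity_B {y : ℝ} (hy : 0 < y) :
    theta4 y * theta4 y = th (2*y) 0 * th (2*y) 0 - th (2*y) (1/2) * th (2*y) (1/2) := by
  have h2y : 0 < 2*y := by linarith
  set f : ℤ × ℤ → ℝ := fun p =>
    ((-1 : ℝ)^p.1 * rexp (-π * y * ((p.1 : ℝ) + 0)^2)) *
    ((-1 : ℝ)^p.2 * rexp (-π * y * ((p.2 : ℝ) + 0)^2)) with hf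
  have hA : HasSum f (theta4 y * theta4 y) := hasSum_mul4 hy
  have h1 : HasSum (fun p : ℤ × ℤ => f (p.1 + p.2, p.1 - p.2)) (th (2*y) 0 * th (2*y) 0) := by
    have heq : (fun p : ℤ × ℤ => f (p.1 + p.2, p.1 - p.2)) = fun p : ℤ × ℤ =>
        rexp (-π * (2*y) * ((p.1 : ℝ) + 0)^2) * rexp (-π * (2*y) * ((p.2 : ℝ) + 0)^2) := by
      funext p
      simp only [hf]
      rw [show ∀ a b c d : ℝ, (a * b) * (c * d) = (a * c) * (b * d) from fun a b c d => by ring,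
        neg_one_zpow_twice, one_mul, ← Real.exp_add, ← Real.exp_add]
      congr 1
      push_cast
      ring
    rw [heq]
    exact hasSum_mul 0 0 h2y
  have h2 : HasSum (fun p : ℤ × ℤ => f (p.1 + p.2 + 1, p.1 - p.2))
      (-(th (2*y) (1/2) * th (2*y) (1/2))) := by
    have heq : (fun p : ℤ × ℤ => f (p.1 + p.2 + 1, p.1 - p.2)) = fun p : ℤ × ℤ =>
        -(rexp (-π * (2*y) * ((p.1 : ℝ) + 1/2)^2) * rexp (-π * (2*y) * ((p.2 : ℝ) + 1/2)^2)) := by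
      funext p
      simp only [hf]
      rw [show ∀ a b c d : ℝ, (a * b) * (c * d) = (a * c) * (b * d) from fun a b c d => by ring,
        neg_one_zpow_twice', ← Real.exp_add, ← Real.exp_add]
      rw [neg_one_mul, neg_inj]
      congr 1
      push_cast
      ring
    rw [heq]
    exact (hasSum_mul (1/2) (1/2) h2y).neg
  have := hA.unique (hasSum_split2 h1 h2)
  linarith [this]

/-- θ₂(y)² = 2 θ₂(2y) θ₃(2y) -/
lemma identity_C {y : ℝ} (hy : 0 < y) :
    theta2 y * theta2 y = 2 * (th (2*y) (1/2) * th (2*y) 0) := by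
  have h2y : 0 < 2*y := by linarith
  set f : ℤ × ℤ → ℝ := fun p =>
    rexp (-π * y * ((p.1 : ℝ) + 1/2)^2) * rexp (-π * y * ((p.2 : ℝ) + 1/2)^2) with hf
  have hA : HasSum f (th y (1/2) * th y (1/2)) := hasSum_mul (1/2) (1/2) hy
  have h1 : HasSum (fun p : ℤ × ℤ => f (p.1 + p.2, p.1 - p.2))
      (th (2*y) (1/2) * th (2*y) 0) := by
    have heq : (fun p : ℤ × ℤ => f (p.1 + p.2, p.1 - p.2)) = fun p : ℤ × ℤ =>
        rexp (-π * (2*y) * ((p.1 : ℝ) + 1/2)^2) * rexp (-π * (2*y) * ((p.2 : ℝ) + 0)^2) := by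
      funext p
      simp only [hf]
      rw [← Real.exp_add, ← Real.exp_add]
      congr 1
      push_cast
      ring
    rw [heq]
    exact hasSum_mul (1/2) 0 h2y
  have h2 : HasSum (fun p : ℤ × ℤ => f (p.1 + p.2 + 1, p.1 - p.2))
      (th (2*y) 1 * th (2*y) (1/2)) := by
    have heq : (fun p : ℤ × ℤ => f (p.1 + p.2 + 1, p.1 - p.2)) = fun p : ℤ × ℤ =>
        rexp (-π * (2*y) * ((p.1 : ℝ) + 1)^2) * rexp (-π * (2*y) * ((p.2 : ℝ) + 1/2)^2) := by
      funext p
      simp only [hf]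
      rw [← Real.exp_add, ← Real.exp_add]
      congr 1
      push_cast
      ring
    rw [heq]
    exact hasSum_mul 1 (1/2) h2y
  have key := hA.unique (hasSum_split2 h1 h2)
  rw [th_one_eq] at key
  rw [theta2_eq]
  linarith [key]

lemma jacobi {y : ℝ} (hy : 0 < y) : theta3 y^4 = theta2 y^4 + theta4 y^4 := by
  have hA := identity_A hy
  have hB := identity_B hy
  have hC := identity_C hy
  nlinarith [hA, hB, hC]

lemma theta3_split {y : ℝ} (hy : 0 < y) : theta3 y = th (4*y) 0 + th (4*y) (1/2) := by
  have h4y : 0 < 4*y := by linarith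
  set f : ℤ → ℝ := fun n => rexp (-π * y * ((n : ℝ) + 0)^2) with hf
  have hA : HasSum f (th y 0) := (summable_th 0 hy).hasSum
  have h1 : HasSum (fun n : ℤ => f (2*n)) (th (4*y) 0) := by
    have heq : (fun n : ℤ => f (2*n)) = fun n : ℤ => rexp (-π * (4*y) * ((n : ℝ) + 0)^2) := by
      funext n; simp only [hf]; congr 1; push_cast; ring
    rw [heq]; exact (summable_th 0 h4y).hasSum
  have h2 : HasSum (fun n : ℤ => f (2*n+1)) (th (4*y) (1/2)) := by
    have heq : (fun n : ℤ => f (2*n+1)) = fun n : ℤ => rexp (-π * (4*y) * ((n : ℝ) + 1/2)^2) := by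
      funext n; simp only [hf]; congr 1; push_cast; ring
    rw [heq]; exact (summable_th (1/2) h4y).hasSum
  rw [theta3_eq]
  exact hA.unique (hasSum_split h1 h2)

lemma theta4_split {y : ℝ} (hy : 0 < y) : theta4 y = th (4*y) 0 - th (4*y) (1/2) := by
  have h4y : 0 < 4*y := by linarith
  set f : ℤ → ℝ := fun n => (-1 : ℝ)^n * rexp (-π * y * ((n : ℝ) + 0)^2) with hf
  have hA : HasSum f (theta4 y) := by
    rw [theta4_eq]; exact (summable_th4 hy).hasSum
  have h1 : HasSum (fun n : ℤ => f (2*n)) (th (4*y) 0) := by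
    have heq : (fun n : ℤ => f (2*n)) = fun n : ℤ => rexp (-π * (4*y) * ((n : ℝ) + 0)^2) := by
      funext n; simp only [hf]
      have hs : ((-1 : ℝ))^(2*n) = 1 := by rw [zpow_mul]; norm_num
      rw [hs, one_mul, Real.exp_eq_exp]
      push_cast; ring
    rw [heq]; exact (summable_th 0 h4y).hasSum
  have h2 : HasSum (fun n : ℤ => f (2*n+1)) (-(th (4*y) (1/2))) := by
    have heq : (fun n : ℤ => f (2*n+1)) = fun n : ℤ =>
        -(rexp (-π * (4*y) * ((n : ℝ) + 1/2)^2)) := by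
      funext n; simp only [hf]
      have hs : ((-1 : ℝ))^(2*n+1) = -1 := by
        rw [zpow_add₀ (by norm_num : (-1 : ℝ) ≠ 0), zpow_mul]; norm_num
      rw [hs, neg_one_mul, neg_inj, Real.exp_eq_exp]
      push_cast; ring
    rw [heq]; exact (summable_th (1/2) h4y).hasSum.neg
  have := hA.unique (hasSum_split h1 h2)
  linarith [this]

lemma theta3_ofReal (y : ℝ) : (theta3 y : ℂ) = jacobiTheta ((y : ℂ) * Complex.I) := by
  rw [theta3, Complex.ofReal_tsum]
  refine tsum_congr fun n => ?_
  rw [Complex.ofReal_exp]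
  congr 1
  rw [show (π : ℂ) * Complex.I * (n : ℂ)^2 * ((y : ℂ) * Complex.I)
      = ((π * n^2 * y : ℝ) : ℂ) * (Complex.I * Complex.I) by push_cast; ring,
    Complex.I_mul_I]
  push_cast
  ring

lemma theta3_quarter : theta3 (1/4) = 2 * theta3 4 := by
  set τ : UpperHalfPlane := ⟨4 * Complex.I, by simp⟩ with hτ
  have h := jacobiTheta_S_smul τ
  have hcoe : ((ModularGroup.S • τ : UpperHalfPlane) : ℂ) = ((1/4 : ℝ) : ℂ) * Complex.I := by
    rw [UpperHalfPlane.modular_S_smul]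
    show (-(τ : ℂ))⁻¹ = _
    have hτc : (τ : ℂ) = 4 * Complex.I := rfl
    rw [hτc]
    exact inv_eq_of_mul_eq_one_left
      (by rw [show ((1/4 : ℝ) : ℂ) * Complex.I * -(4 * Complex.I)
            = -(((1/4 : ℝ) : ℂ) * 4) * (Complex.I * Complex.I) by ring, Complex.I_mul_I]
          push_cast; ring)
  have hpow : (-Complex.I * (τ : ℂ))^(1/2 : ℂ) = 2 := by
    have hτc : (τ : ℂ) = 4 * Complex.I := rfl
    rw [hτc, show -Complex.I * (4 * Complex.I) = -4 * (Complex.I * Complex.I) by ring,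
      Complex.I_mul_I]
    norm_num
    have h1 : ((4 : ℝ) : ℂ)^(((1/2 : ℝ)) : ℂ) = (((4 : ℝ)^(1/2 : ℝ) : ℝ) : ℂ) :=
      (Complex.ofReal_cpow (by norm_num) _).symm
    have h2 : (4 : ℝ)^(1/2 : ℝ) = 2 := by
      rw [show (4 : ℝ) = 2^(2 : ℕ) by norm_num, ← Real.rpow_natCast 2 2,
        ← Real.rpow_mul (by norm_num)]
      norm_num
    rw [show (4 : ℂ) = ((4 : ℝ) : ℂ) by norm_num, show ((1:ℂ)/2) = (((1/2 : ℝ)) : ℂ) by norm_num,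
      h1, h2]
    norm_num
  rw [hcoe, hpow] at h
  have hfin : ((theta3 (1/4) : ℝ) : ℂ) = ((2 * theta3 4 : ℝ) : ℂ) := by
    rw [theta3_ofReal, Complex.ofReal_mul, theta3_ofReal, h]
    norm_num
    rfl
  exact_mod_cast hfin

lemma th_pos {y : ℝ} (h : ℝ) (hy : 0 < y) : 0 < th y h := by
  have hs := summable_th h hy
  have h0 : rexp (-π * y * (((0 : ℤ) : ℝ) + h)^2) ≤ th y h :=
    Summable.le_tsum hs 0 (fun j _ => (Real.exp_pos _).le)
  exact lt_of_lt_of_le (Real.exp_pos _) h0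

lemma theta3_pos {y : ℝ} (hy : 0 < y) : 0 < theta3 y := by
  rw [theta3_eq]; exact th_pos 0 hy

lemma theta2_pos {y : ℝ} (hy : 0 < y) : 0 < theta2 y := by
  rw [theta2_eq]; exact th_pos (1/2) hy

lemma theta3_add_split {y : ℝ} (hy : 0 < y) : theta3 y = theta3 (4*y) + theta2 (4*y) := by
  rw [theta3_split hy, theta3_eq, theta2_eq]

lemma theta4_split' {y : ℝ} (hy : 0 < y) : theta4 y = theta3 (4*y) - theta2 (4*y) := by
  rw [theta4_split hy, theta3_eq, theta2_eq]

lemma theta24_one : theta2 1 = theta4 1 := by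
  have h1 := theta3_add_split (by norm_num : (0:ℝ) < 1/4)
  have h2 := theta4_split' one_pos
  have h3 := theta3_add_split one_pos
  have h4 := theta3_quarter
  norm_num at h1 h2 h3
  linarith

lemma zfun_nonneg (y : ℝ) : 0 ≤ zfun y := by rw [zfun]; positivity

lemma zfun_le {y : ℝ} (hy : 0 < y) : zfun y ≤ 1/4 := by
  have h3 := theta3_pos hy
  rw [zfun, div_le_iff₀ (by positivity)]
  have hj := jacobi hy
  have h8 : theta3 y^8 = (theta2 y^4 + theta4 y^4)^2 := by
    calc theta3 y^8 = (theta3 y^4)^2 := by ring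
    _ = (theta2 y^4 + theta4 y^4)^2 := by rw [hj]
  rw [h8]
  nlinarith [sq_nonneg (theta2 y^4 - theta4 y^4)]

lemma zfun_one : zfun 1 = 1/4 := by
  have hb : 0 < theta2 1 := theta2_pos one_pos
  have hj := jacobi one_pos
  rw [← theta24_one] at hj
  have h4 : theta3 1^4 = 2 * theta2 1^4 := by linarith
  have h8 : theta3 1^8 = 4 * theta2 1^8 := by
    calc theta3 1^8 = (theta3 1^4)^2 := by ring
    _ = (2 * theta2 1^4)^2 := by rw [h4]
    _ = 4 * theta2 1^8 := by ring
  rw [zfun, ← theta24_one, h8, div_eq_iff (ne_of_gt (mul_pos (by norm_num) (pow_pos hb 8)))]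
  ring

lemma P32_min {z : ℝ} (h0 : 0 ≤ z) (h1 : z ≤ 1/4) : P32 (1/4) ≤ P32 z := by
  rw [P32, P32]
  nlinarith [mul_nonneg h0 (sub_nonneg.2 h1), sq_nonneg z, sq_nonneg (z - 1/4),
    mul_nonneg (mul_nonneg h0 h0) (sub_nonneg.2 h1),
    mul_nonneg (mul_nonneg h0 h0) (mul_nonneg h0 (sub_nonneg.2 h1))]

end Aux

theorem secrecy_dim32 :
    (∀ y : ℝ, 0 < y → P32 (1 / 4) ≤ P32 (zfun y)) ∧ 0 < P32 (1 / 4) ∧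
      (∀ y : ℝ, 0 < y → (P32 (zfun y))⁻¹ ≤ (P32 (zfun 1))⁻¹) ∧
      (P32 (zfun 1))⁻¹ = (P32 (1 / 4))⁻¹ := by
  have hP : ∀ y : ℝ, 0 < y → P32 (1/4) ≤ P32 (zfun y) :=
    fun y hy => P32_min (zfun_nonneg y) (zfun_le hy)
  have hpos : 0 < P32 (1/4) := by norm_num [P32]
  refine ⟨hP, hpos, ?_, ?_⟩
  · intro y hy
    rw [zfun_one]
    exact inv_anti₀ hpos (hP y hy)
  · rw [zfun_one]
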